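/- arXiv:1305.2088 — 5 statements merged into one kernel-verified Lean document; each statement's English description precedes it below -/
import Mathlib

section
/- Let r_k = C(2k,k)/((2k−1)·4^k) for integers k ≥ 1, and define r_{1+} = 1 and r_{k+} = 2k·r_k for k ≥ 2. Then r_{k+} = ∏_{j=1}^{k−1} (1 − 1/(2j)) for k ≥ 2, r_{k+} − r_{(k+1)+} = r_k for all k ≥ 1, and consequently r_{k+} = Σ_{ℓ=k}^∞ r_ℓ for all k ≥ 1; in particular Σ_{k=1}^∞ r_k = 1. -/
open Filter

/-- `r_k = C(2k, k) / ((2k - 1) · 4^k)`. -/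
noncomputable def rCF (k : ℕ) : ℝ :=
  (Nat.choose (2 * k) k : ℝ) / ((2 * (k : ℝ) - 1) * 4 ^ k)

/-- `r_{1+} = 1` and `r_{k+} = 2k · r_k` for `k ≥ 2`. -/
noncomputable def rCFplus (k : ℕ) : ℝ := if k = 1 then 1 else 2 * (k : ℝ) * rCF k

/-!
Since `r_{(k+1)+} = C(2k,k)/4^k = (2k - 1) r_k` by the recurrence for central binomial
coefficients, consecutive `r_{k+}` differ by `r_k` and have ratio `1 - 1/(2k)`; this gives the
product formula, and the series `∑_{ℓ ≥ k} r_ℓ` telescopes to `r_{k+} - lim r_{m+}`. The limit is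
`0` because `(2m - 1) r_{m+}²` is nonincreasing (as `(2m - 1)(2m + 1) ≤ (2m)²`) and equals `1`
at `m = 1`, so `r_{m+}² ≤ 1/(2m - 1)`.
-/

open Topology

theorem hasSum_sub_succ_of_antitone {g : ℕ → ℝ} (hg : Antitone g)
    (hlim : Tendsto g atTop (𝓝 0)) : HasSum (fun n ↦ g n - g (n + 1)) (g 0) := by
  rw [hasSum_iff_tendsto_nat_of_nonneg (fun n ↦ sub_nonneg.2 (hg n.le_succ))]
  simp_rw [Finset.sum_range_sub']
  simpa using tendsto_const_nhds.sub hlim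

lemma two_mul_natCast_sub_one_ne_zero (k : ℕ) : 2 * (k : ℝ) - 1 ≠ 0 := by
  rw [sub_ne_zero]
  exact_mod_cast (by omega : 2 * k ≠ 1)

lemma rCF_pos {k : ℕ} (hk : 1 ≤ k) : 0 < rCF k := by
  have hk' : (1 : ℝ) ≤ k := by exact_mod_cast hk
  have := Nat.choose_pos (n := 2 * k) (k := k) (by omega)
  exact div_pos (by positivity) (mul_pos (by linarith) (by positivity))

lemma two_mul_sub_one_mul_rCF (k : ℕ) :
    (2 * (k : ℝ) - 1) * rCF k = k.centralBinom / 4 ^ k := by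
  rw [rCF, Nat.centralBinom_eq_two_mul_choose, mul_div_assoc',
    mul_div_mul_left _ _ (two_mul_natCast_sub_one_ne_zero k)]

lemma rCFplus_eq_two_mul_mul_rCF {k : ℕ} (hk : 1 ≤ k) : rCFplus k = 2 * k * rCF k := by
  obtain rfl | hk := hk.eq_or_lt
  · norm_num [rCFplus, rCF]
  · rw [rCFplus, if_neg hk.ne']

lemma rCFplus_succ_eq_centralBinom_div (k : ℕ) : rCFplus (k + 1) = k.centralBinom / 4 ^ k := by
  rcases k with _ | k
  · simp [rCFplus]
  rw [rCFplus_eq_two_mul_mul_rCF (by omega), rCF, ← Nat.centralBinom_eq_two_mul_choose]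
  have hrec : ((k : ℝ) + 2) * (k + 1 + 1).centralBinom
      = 2 * (2 * (k + 1) + 1) * (k + 1).centralBinom := by
    exact_mod_cast Nat.succ_mul_centralBinom_succ (k + 1)
  have : (2 * (k : ℝ) + 3) ≠ 0 := by positivity
  push_cast
  rw [show 2 * ((k : ℝ) + 1 + 1) - 1 = 2 * k + 3 by ring]
  field_simp
  linear_combination 8 * (4 : ℝ) ^ k * hrec

lemma rCFplus_succ (k : ℕ) : rCFplus (k + 1) = (2 * (k : ℝ) - 1) * rCF k := by
  rw [rCFplus_succ_eq_centralBinom_div, two_mul_sub_one_mul_rCF]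

lemma rCFplus_sub_rCFplus_succ {k : ℕ} (hk : 1 ≤ k) :
    rCFplus k - rCFplus (k + 1) = rCF k := by
  rw [rCFplus_eq_two_mul_mul_rCF hk, rCFplus_succ]
  ring

lemma rCFplus_succ_eq_mul {k : ℕ} (hk : 1 ≤ k) :
    rCFplus (k + 1) = (1 - 1 / (2 * (k : ℝ))) * rCFplus k := by
  have : (k : ℝ) ≠ 0 := by positivity
  rw [rCFplus_succ, rCFplus_eq_two_mul_mul_rCF hk]
  field_simp

lemma rCFplus_succ_eq_prod (n : ℕ) :
    rCFplus (n + 1) = ∏ j ∈ Finset.Icc 1 n, (1 - 1 / (2 * (j : ℝ))) := by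
  induction n with
  | zero => simp [rCFplus]
  | succ n ih =>
    rw [Finset.prod_Icc_succ_top (by omega), ← ih, rCFplus_succ_eq_mul (by omega), mul_comm]

lemma rCFplus_sq_le {k : ℕ} (hk : 1 ≤ k) : (2 * (k : ℝ) - 1) * rCFplus k ^ 2 ≤ 1 := by
  induction k, hk using Nat.le_induction with
  | base => norm_num [rCFplus]
  | succ n hn ih =>
    have hn' : (1 : ℝ) ≤ n := by exact_mod_cast hn
    have hn0 : (n : ℝ) ≠ 0 := by positivity
    have hfac : (2 * (n : ℝ) + 1) * (2 * n - 1) ≤ (2 * n) ^ 2 := by nlinarith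
    calc (2 * ((n + 1 : ℕ) : ℝ) - 1) * rCFplus (n + 1) ^ 2
        = (2 * n + 1) * (2 * n - 1) / (2 * n) ^ 2 * ((2 * n - 1) * rCFplus n ^ 2) := by
          rw [rCFplus_succ_eq_mul hn]
          push_cast
          field_simp
          ring
      _ ≤ 1 * ((2 * n - 1) * rCFplus n ^ 2) := by
          gcongr
          · nlinarith [sq_nonneg (rCFplus n)]
          · exact div_le_one_of_le₀ hfac (by positivity)
      _ ≤ 1 := by linarith

lemma tendsto_rCFplus_atTop : Tendsto rCFplus atTop (𝓝 0) := by
  have hbound : Tendsto (fun k : ℕ ↦ (2 * (k : ℝ) - 1)⁻¹) atTop (𝓝 0) :=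
    tendsto_inv_atTop_zero.comp <| tendsto_atTop_add_const_right _ (-1) <|
      tendsto_natCast_atTop_atTop.const_mul_atTop two_pos
  have hsq : Tendsto (fun k ↦ rCFplus k ^ 2) atTop (𝓝 0) := by
    refine squeeze_zero' (.of_forall fun k ↦ sq_nonneg _) ?_ hbound
    filter_upwards [eventually_ge_atTop 1] with k hk
    have hk' : (1 : ℝ) ≤ k := by exact_mod_cast hk
    rw [← one_div, le_div_iff₀ (by linarith), mul_comm]
    exact rCFplus_sq_le hk
  refine (tendsto_zero_iff_abs_tendsto_zero _).2 ?_
  simpa [Function.comp_def, Real.sqrt_sq_eq_abs] using hsq.sqrt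

lemma hasSum_rCF_add {k : ℕ} (hk : 1 ≤ k) :
    HasSum (fun ℓ ↦ rCF (k + ℓ)) (rCFplus k) := by
  have hdiff (ℓ : ℕ) : rCFplus (k + ℓ) - rCFplus (k + (ℓ + 1)) = rCF (k + ℓ) :=
    rCFplus_sub_rCFplus_succ (by omega)
  have hanti : Antitone fun ℓ ↦ rCFplus (k + ℓ) := antitone_nat_of_succ_le fun ℓ ↦ by
    linarith [hdiff ℓ, rCF_pos (k := k + ℓ) (by omega)]
  have hlim : Tendsto (fun ℓ ↦ rCFplus (k + ℓ)) atTop (𝓝 0) := by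
    simpa only [add_comm k] using (tendsto_add_atTop_iff_nat k).2 tendsto_rCFplus_atTop
  simpa only [hdiff, add_zero] using hasSum_sub_succ_of_antitone hanti hlim

theorem rCFplus_identities :
    (∀ k : ℕ, 2 ≤ k →
      rCFplus k = ∏ j ∈ Finset.Icc 1 (k - 1), (1 - 1 / (2 * (j : ℝ)))) ∧
    (∀ k : ℕ, 1 ≤ k → rCFplus k - rCFplus (k + 1) = rCF k) ∧
    (∀ k : ℕ, 1 ≤ k → HasSum (fun ℓ : ℕ => rCF (k + ℓ)) (rCFplus k)) ∧
    HasSum (fun k : ℕ => rCF (k + 1)) 1 := by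
  refine ⟨fun k hk ↦ ?_, fun k ↦ rCFplus_sub_rCFplus_succ, fun k ↦ hasSum_rCF_add, ?_⟩
  · obtain ⟨n, rfl⟩ : ∃ n, k = n + 1 := ⟨k - 1, by omega⟩
    exact rCFplus_succ_eq_prod n
  · simpa [rCFplus, add_comm] using hasSum_rCF_add le_rfl
end

section
/- Let r_k = C(2k,k)/((2k−1)·4^k) for integers k ≥ 1. Then as k → ∞, r_k = (1/(2√π))·k^{−3/2} + O(k^{−5/2}); that is, there exists a constant C > 0 such that |r_k − (1/(2√π))·k^{−3/2}| ≤ C·k^{−5/2} for all k ≥ 1. -/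
open Real Nat

theorem Real.rpow_neg_natCast_add_half {x : ℝ} (hx : 0 ≤ x) (n : ℕ) :
    x ^ (-((n : ℝ) + 1 / 2)) = (x ^ n * √x)⁻¹ := by
  rw [rpow_neg hx, rpow_add' hx (by positivity), rpow_natCast, sqrt_eq_rpow]

theorem Real.Wallis.W_eq_inv_centralBinom_div_four_pow_sq (k : ℕ) :
    Wallis.W k = ((centralBinom k / 4 ^ k : ℝ) ^ 2 * (2 * k + 1))⁻¹ := by
  have hfact : (centralBinom k * (k ! * k !) : ℝ) = (2 * k)! := by
    have h := Nat.add_choose_mul_factorial_mul_factorial k k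
    rw [← two_mul] at h
    rw [centralBinom_eq_two_mul_choose, ← h]
    push_cast
    ring
  have hpow : (2 : ℝ) ^ (4 * k) = (4 ^ k) ^ 2 := by
    rw [show (4 : ℝ) = 2 ^ 2 by norm_num, ← pow_mul, ← pow_mul]
    ring_nf
  have := centralBinom_pos k
  rw [Wallis.W_eq_factorial_ratio, ← hfact, hpow]
  field_simp

theorem two_div_pi_le_centralBinom_div_four_pow_sq_mul (k : ℕ) :
    2 / π ≤ (centralBinom k / 4 ^ k : ℝ) ^ 2 * (2 * k + 1) := by
  have h := Wallis.W_le k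
  have := centralBinom_pos k
  rwa [Wallis.W_eq_inv_centralBinom_div_four_pow_sq, inv_le_comm₀ (by positivity) (by positivity),
    inv_div] at h

theorem pi_mul_centralBinom_div_four_pow_sq_mul_le (k : ℕ) :
    π * (centralBinom k / 4 ^ k : ℝ) ^ 2 * (2 * k + 1) ^ 2 ≤ 2 * (2 * k + 2) := by
  have h := Wallis.le_W k
  have := centralBinom_pos k
  rw [Wallis.W_eq_inv_centralBinom_div_four_pow_sq, le_inv_comm₀ (by positivity) (by positivity),
    inv_mul', inv_div, le_div_iff₀ (by positivity), le_div_iff₀ (by positivity)] at h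
  linarith

theorem sqrt_pi_mul_mul_centralBinom_div_four_pow_le_one (k : ℕ) :
    √(π * k) * (centralBinom k / 4 ^ k : ℝ) ≤ 1 := by
  refine (sq_le_one_iff₀ (by positivity)).mp ?_
  rw [mul_pow, sq_sqrt (by positivity)]
  have h := pi_mul_centralBinom_div_four_pow_sq_mul_le k
  have : 0 ≤ π * (centralBinom k / 4 ^ k : ℝ) ^ 2 := by positivity
  -- `4k(k+1) ≤ (2k+1)²`
  nlinarith

theorem two_mul_sub_one_le_two_mul_mul_sqrt_pi_mul_mul_centralBinom_div_four_pow (k : ℕ) :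
    2 * k - 1 ≤ 2 * k * (√(π * k) * (centralBinom k / 4 ^ k : ℝ)) := by
  set u := √(π * k) * (centralBinom k / 4 ^ k : ℝ) with hu
  have hu_le : u ≤ 1 := sqrt_pi_mul_mul_centralBinom_div_four_pow_le_one k
  have hu_sq : 2 * k ≤ u ^ 2 * (2 * k + 1) :=
    calc (2 * k : ℝ) = π * k * (2 / π) := by field_simp
      _ ≤ π * k * ((centralBinom k / 4 ^ k : ℝ) ^ 2 * (2 * k + 1)) := by
        gcongr
        exact two_div_pi_le_centralBinom_div_four_pow_sq_mul k
      _ = u ^ 2 * (2 * k + 1) := by rw [hu, mul_pow, sq_sqrt (by positivity)]; ring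
  have : 0 ≤ u := by positivity
  -- `u ≥ u² ≥ 2k/(2k+1) ≥ 1 - 1/(2k)`
  nlinarith

theorem rCF_eq (k : ℕ) : rCF k = (centralBinom k / 4 ^ k : ℝ) / (2 * k - 1) := by
  rw [rCF, centralBinom_eq_two_mul_choose, div_div, mul_comm ((4 : ℝ) ^ k)]

theorem rCF_sub_eq {k : ℕ} (hk : 1 ≤ k) :
    rCF k - 1 / (2 * √π) * (k : ℝ) ^ (-(3 : ℝ) / 2) =
      (2 * k * (√(π * k) * (centralBinom k / 4 ^ k : ℝ)) - (2 * k - 1)) /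
        (2 * k * (2 * k - 1) * √π * √k) := by
  have : (2 * k - 1 : ℝ) ≠ 0 := by
    have : (1 : ℝ) ≤ k := by exact_mod_cast hk
    linarith
  rw [rCF_eq, show -(3 : ℝ) / 2 = -((1 : ℕ) + 1 / 2) by norm_num,
    rpow_neg_natCast_add_half (by positivity), sqrt_mul pi_pos.le]
  field_simp

theorem rCF_asymptotics :
    ∃ C : ℝ, 0 < C ∧ ∀ k : ℕ, 1 ≤ k →
      |rCF k - 1 / (2 * Real.sqrt Real.pi) * (k : ℝ) ^ (-(3 : ℝ) / 2)|
        ≤ C * (k : ℝ) ^ (-(5 : ℝ) / 2) := by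
  refine ⟨1, one_pos, fun k hk => ?_⟩
  have hk' : (1 : ℝ) ≤ k := by exact_mod_cast hk
  set u := √(π * k) * (centralBinom k / 4 ^ k : ℝ)
  have hu_le : u ≤ 1 := sqrt_pi_mul_mul_centralBinom_div_four_pow_le_one k
  have hu_ge : 2 * k - 1 ≤ 2 * k * u :=
    two_mul_sub_one_le_two_mul_mul_sqrt_pi_mul_mul_centralBinom_div_four_pow k
  have hsqrt_pi : 1 ≤ √π := one_le_sqrt.mpr (by linarith [pi_gt_three])
  have hden : 0 < 2 * k * (2 * k - 1) * √π * √k := by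
    have : (0 : ℝ) < 2 * k - 1 := by linarith
    positivity
  rw [rCF_sub_eq hk, show -(5 : ℝ) / 2 = -((2 : ℕ) + 1 / 2) by norm_num,
    rpow_neg_natCast_add_half (by positivity), abs_of_nonneg (div_nonneg (by linarith) hden.le),
    one_mul]
  calc (2 * k * u - (2 * k - 1)) / (2 * k * (2 * k - 1) * √π * √k)
      ≤ 1 / (2 * k * (2 * k - 1) * √π * √k) := by gcongr; nlinarith
    _ ≤ 1 / (k * k * 1 * √k) := by gcongr <;> nlinarith
    _ = ((k : ℝ) ^ 2 * √k)⁻¹ := by ring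
end

section
/- Let (Y_n)_{n≥1} be a sequence of nonnegative random variables on a probability space (Ω, P) and set S_n = Σ_{k=1}^n Y_k. Suppose E[S_n] → ∞ as n → ∞, sup_{n≥1} E[Y_n] < ∞, and there exist δ > 0 and C > 0 such that Var(S_n) ≤ C·(E[S_n])^{2−δ} for all sufficiently large n. Then lim_{n→∞} S_n/E[S_n] = 1 almost surely. -/
/-!
Write `a n = E[S n]`. Along the indices `c j` at which `a` first reaches `(j + 1) ^ (2 / δ)`,
Chebyshev's inequality bounds `P(|S (c j) - a (c j)| ≥ ε a (c j))` by
`C ε⁻² a (c j) ^ (-δ) ≤ C ε⁻² (j + 1)⁻²`, which is summable, so by Borel–Cantelli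
`S (c j) / a (c j) → 1` almost surely. Since `a` has bounded increments,
`a (c (j + 1)) / a (c j) → 1`, and as both `S` and `a` are monotone, `S n / a n` is squeezed
between `S (c j) / a (c (j + 1))` and `S (c (j + 1)) / a (c j)` for `c j ≤ n < c (j + 1)`.
-/

open MeasureTheory ProbabilityTheory Filter
open scoped Topology

theorem exists_tendsto_atTop_forall_le_lt_succ {c : ℕ → ℕ} (hc : Monotone c)
    (hcT : Tendsto c atTop atTop) :
    ∃ k : ℕ → ℕ, Tendsto k atTop atTop ∧ ∀ n ≥ c 0, c (k n) ≤ n ∧ n < c (k n + 1) := by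
  have hex : ∀ n, ∃ i, n < c i := fun n => (hcT.eventually_gt_atTop n).exists
  refine ⟨fun n => Nat.find (hex n) - 1, tendsto_atTop.2 fun J => ?_, fun n hn => ?_⟩
  · filter_upwards [eventually_ge_atTop (c J)] with n hn
    by_contra! hlt
    exact (Nat.find_spec (hex n)).not_ge (hn.trans' (hc (by omega)))
  · have hpos : 0 < Nat.find (hex n) := (Nat.find_pos (hex n)).2 hn.not_gt
    refine ⟨not_lt.1 (Nat.find_min (hex n) (Nat.sub_one_lt hpos.ne')), ?_⟩
    rw [Nat.sub_add_cancel hpos]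
    exact Nat.find_spec (hex n)

theorem tendsto_div_of_monotone_of_tendsto_subseq_div {s a : ℕ → ℝ} {c : ℕ → ℕ} {l : ℝ}
    (hs : Monotone s) (hs0 : ∀ n, 0 ≤ s n) (ha : Monotone a) (hc : Monotone c)
    (hcT : Tendsto c atTop atTop) (hpos : ∀ j, 0 < a (c j))
    (hsub : Tendsto (fun j => s (c j) / a (c j)) atTop (𝓝 l))
    (hratio : Tendsto (fun j => a (c (j + 1)) / a (c j)) atTop (𝓝 1)) :
    Tendsto (fun n => s n / a n) atTop (𝓝 l) := by
  obtain ⟨k, hkT, hk⟩ := exists_tendsto_atTop_forall_le_lt_succ hc hcT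
  have hlower : Tendsto (fun j => s (c j) / a (c (j + 1))) atTop (𝓝 l) := by
    have := hsub.mul (hratio.inv₀ one_ne_zero)
    rw [inv_one, mul_one] at this
    refine this.congr fun j => ?_
    field_simp [(hpos j).ne', (hpos (j + 1)).ne']
  have hupper : Tendsto (fun j => s (c (j + 1)) / a (c j)) atTop (𝓝 l) := by
    have := (hsub.comp (tendsto_add_atTop_nat 1)).mul hratio
    rw [mul_one] at this
    refine this.congr fun j => ?_
    simp only [Function.comp_apply]
    field_simp [(hpos j).ne', (hpos (j + 1)).ne']
  refine tendsto_of_tendsto_of_tendsto_of_le_of_le' (hlower.comp hkT) (hupper.comp hkT) ?_ ?_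
  all_goals
    filter_upwards [eventually_ge_atTop (c 0)] with n hn
    obtain ⟨hle, hlt⟩ := hk n hn
  · exact div_le_div₀ (hs0 n) (hs hle) ((hpos _).trans_le (ha hle)) (ha hlt.le)
  · exact div_le_div₀ (hs0 _) (hs hlt.le) (hpos _) (ha hle)

theorem exists_monotone_index_le_le_add {a g : ℕ → ℝ} {M : ℝ} (ha : Monotone a)
    (haT : Tendsto a atTop atTop) (hstep : ∀ n, a (n + 1) ≤ a n + M) (hg : Monotone g)
    (hgT : Tendsto g atTop atTop) :
    ∃ c : ℕ → ℕ, Monotone c ∧ Tendsto c atTop atTop ∧ (∀ j, g j ≤ a (c j)) ∧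
      ∀ᶠ j in atTop, a (c j) ≤ g j + M := by
  have hex : ∀ j, ∃ n, g j ≤ a n := fun j => (haT.eventually_ge_atTop (g j)).exists
  refine ⟨fun j => Nat.find (hex j), fun i j hij => Nat.find_min' _ ((hg hij).trans
    (Nat.find_spec (hex j))), tendsto_atTop.2 fun N => ?_, fun j => Nat.find_spec (hex j), ?_⟩
  · filter_upwards [hgT.eventually_gt_atTop (a N)] with j hj
    by_contra! hlt
    exact (hj.trans_le (Nat.find_spec (hex j))).not_ge (ha hlt.le)
  · filter_upwards [hgT.eventually_gt_atTop (a 0)] with j hj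
    have hpos : 0 < Nat.find (hex j) := (Nat.find_pos (hex j)).2 hj.not_ge
    obtain ⟨m, hm⟩ := Nat.exists_eq_add_of_lt hpos
    have hprev : a m < g j := not_le.1 (Nat.find_min (hex j) (by omega))
    calc a (Nat.find (hex j)) = a (m + 1) := by rw [hm, zero_add]
      _ ≤ a m + M := hstep m
      _ ≤ g j + M := by linarith

theorem tendsto_div_succ_of_le_le_add {u g : ℕ → ℝ} {M : ℝ} (hu : Monotone u)
    (hgu : ∀ j, g j ≤ u j) (hug : ∀ᶠ j in atTop, u j ≤ g j + M) (hgpos : ∀ j, 0 < g j)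
    (hgT : Tendsto g atTop atTop) (hg : Tendsto (fun j => g (j + 1) / g j) atTop (𝓝 1)) :
    Tendsto (fun j => u (j + 1) / u j) atTop (𝓝 1) := by
  have hupper : Tendsto (fun j => g (j + 1) / g j + M / g j) atTop (𝓝 1) := by
    simpa using hg.add (tendsto_const_nhds.div_atTop hgT)
  refine tendsto_of_tendsto_of_tendsto_of_le_of_le' tendsto_const_nhds hupper
    (Eventually.of_forall fun j => ?_) ?_
  · rw [one_le_div ((hgpos j).trans_le (hgu j))]
    exact hu j.le_succ
  · filter_upwards [(tendsto_add_atTop_nat 1).eventually hug] with j hj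
    rw [← add_div]
    exact div_le_div₀ (by linarith [hgpos (j + 1), hgu (j + 1)]) hj (hgpos j) (hgu j)

theorem tendsto_rpow_natCast_succ_add_one_div (p : ℝ) :
    Tendsto (fun j : ℕ => (((j + 1 : ℕ) : ℝ) + 1) ^ p / ((j : ℝ) + 1) ^ p) atTop (𝓝 1) := by
  have h : Tendsto (fun j : ℕ => 1 + 1 / ((j : ℝ) + 1)) atTop (𝓝 1) := by
    simpa using (tendsto_one_div_add_atTop_nhds_zero_nat (𝕜 := ℝ)).const_add 1
  have := (Real.continuousAt_rpow_const 1 p (Or.inl one_ne_zero)).tendsto.comp h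
  rw [Real.one_rpow] at this
  refine this.congr fun j => ?_
  rw [Function.comp_apply, ← Real.div_rpow (by positivity) (by positivity)]
  congr 1
  field_simp
  push_cast
  ring

theorem ae_tendsto_sub_integral_div_of_summable_variance {Ω : Type*} [MeasurableSpace Ω]
    {P : Measure Ω} [IsProbabilityMeasure P] {X : ℕ → Ω → ℝ} {b : ℕ → ℝ}
    (hX : ∀ j, MemLp (X j) 2 P) (hb : ∀ j, 0 < b j)
    (hsum : Summable fun j => variance (X j) P / b j ^ 2) :
    ∀ᵐ ω ∂P, Tendsto (fun j => (X j ω - P[X j]) / b j) atTop (𝓝 0) := by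
  have hdev : ∀ ε > 0, ∀ᵐ ω ∂P, ∀ᶠ j in atTop, |X j ω - P[X j]| < ε * b j := by
    intro ε hε
    have hsumε : Summable fun j => variance (X j) P / (ε * b j) ^ 2 := by
      simpa [mul_pow, div_mul_eq_div_div_swap] using hsum.div_const (ε ^ 2)
    have hfin : ∑' j, P {ω | ε * b j ≤ |X j ω - P[X j]|} ≠ ⊤ := by
      refine ne_top_of_le_ne_top
        (ENNReal.ofReal_ne_top (r := ∑' j, variance (X j) P / (ε * b j) ^ 2)) ?_
      rw [ENNReal.ofReal_tsum_of_nonneg (fun j => by positivity [variance_nonneg (X j) P]) hsumε]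
      exact ENNReal.tsum_le_tsum fun j => meas_ge_le_variance_div_sq (hX j) (by positivity [hb j])
    filter_upwards [ae_eventually_notMem hfin] with ω hω
    simpa using hω
  simp_rw [Metric.nhds_basis_ball_inv_nat_succ.tendsto_right_iff]
  filter_upwards [ae_all_iff.2 fun k : ℕ => hdev (1 / (k + 1)) (by positivity)] with ω hω k _
  filter_upwards [hω k] with j hj
  rwa [Metric.mem_ball, dist_zero_right, norm_div, Real.norm_of_nonneg (hb j).le, Real.norm_eq_abs,
    div_lt_iff₀ (hb j)]

theorem ae_tendsto_div_integral_of_variance_le {Ω : Type*} [MeasurableSpace Ω]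
    {P : Measure Ω} [IsProbabilityMeasure P] {S : ℕ → Ω → ℝ} {M δ C : ℝ}
    (hL2 : ∀ n, MemLp (S n) 2 P) (hS0 : ∀ n ω, 0 ≤ S n ω) (hmono : ∀ ω, Monotone (S · ω))
    (hstep : ∀ n, P[S (n + 1)] ≤ P[S n] + M) (hES : Tendsto (fun n => P[S n]) atTop atTop)
    (hδ : 0 < δ) (hC : 0 ≤ C) (hvar : ∀ᶠ n in atTop, variance (S n) P ≤ C * P[S n] ^ (2 - δ)) :
    ∀ᵐ ω ∂P, Tendsto (fun n => S n ω / P[S n]) atTop (𝓝 1) := by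
  set a : ℕ → ℝ := fun n => P[S n]
  have ha : Monotone a := fun m n h =>
    integral_mono ((hL2 m).integrable one_le_two) ((hL2 n).integrable one_le_two) (hmono · h)
  set g : ℕ → ℝ := fun j => ((j : ℝ) + 1) ^ (2 / δ)
  have hgpos : ∀ j, 0 < g j := fun j => by positivity
  have hg : Monotone g := fun i j h => by dsimp only [g]; gcongr
  have hgT : Tendsto g atTop atTop := (tendsto_rpow_atTop (by positivity)).comp
    (tendsto_atTop_add_const_right _ 1 tendsto_natCast_atTop_atTop)
  obtain ⟨c, hc, hcT, hgc, hcg⟩ := exists_monotone_index_le_le_add ha hES hstep hg hgT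
  have hpos : ∀ j, 0 < a (c j) := fun j => (hgpos j).trans_le (hgc j)
  have hsum : Summable fun j => variance (S (c j)) P / a (c j) ^ 2 := by
    have hbound : Summable fun j : ℕ => C * (((j : ℝ) + 1) ^ 2)⁻¹ := by
      refine Summable.mul_left C ?_
      exact_mod_cast (summable_nat_add_iff 1).2 (Real.summable_nat_pow_inv.2 one_lt_two)
    refine hbound.of_norm_bounded_eventually_nat ?_
    filter_upwards [hcT.eventually hvar] with j hj
    rw [Real.norm_of_nonneg (by positivity [variance_nonneg (S (c j)) P])]
    calc variance (S (c j)) P / a (c j) ^ 2 ≤ C * a (c j) ^ (2 - δ) / a (c j) ^ 2 := by gcongr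
      _ = C * (a (c j) ^ δ)⁻¹ := by
        rw [Real.rpow_sub (hpos j), Real.rpow_two]
        field_simp [(hpos j).ne']
      _ ≤ C * (g j ^ δ)⁻¹ := by gcongr; exact hgc j
      _ = C * (((j : ℝ) + 1) ^ 2)⁻¹ := by
        rw [← Real.rpow_mul (by positivity), div_mul_cancel₀ _ hδ.ne', Real.rpow_two]
  have hsub : ∀ᵐ ω ∂P, Tendsto (fun j => S (c j) ω / a (c j)) atTop (𝓝 1) := by
    filter_upwards [ae_tendsto_sub_integral_div_of_summable_variance (fun j => hL2 (c j)) hpos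
      hsum] with ω hω
    have := hω.add_const 1
    rw [zero_add] at this
    refine this.congr fun j => ?_
    change (S (c j) ω - a (c j)) / a (c j) + 1 = _
    rw [sub_div, div_self (hpos j).ne', sub_add_cancel]
  filter_upwards [hsub] with ω hω
  exact tendsto_div_of_monotone_of_tendsto_subseq_div (hmono ω) (hS0 · ω) ha hc hcT hpos hω
    (tendsto_div_succ_of_le_le_add (ha.comp hc) hgc hcg hgpos hgT
      (tendsto_rpow_natCast_succ_add_one_div _))

theorem SLLN_variance_condition_general
    {Ω : Type*} [MeasurableSpace Ω] (P : Measure Ω) [IsProbabilityMeasure P]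
    (Y : ℕ → Ω → ℝ)
    (hnonneg : ∀ n ω, 0 ≤ Y n ω) (hL2 : ∀ n, MemLp (Y n) 2 P)
    (S : ℕ → Ω → ℝ) (hS : ∀ n ω, S n ω = ∑ k ∈ Finset.Icc 1 n, Y k ω)
    (hES : Tendsto (fun n => ∫ ω, S n ω ∂P) atTop atTop)
    (hEY : ∃ M : ℝ, ∀ n, ∫ ω, Y n ω ∂P ≤ M)
    (δ C : ℝ) (hδ : 0 < δ) (hC : 0 < C)
    (hvar : ∀ᶠ n in atTop,
      variance (S n) P ≤ C * (∫ ω, S n ω ∂P) ^ (2 - δ)) :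
    ∀ᵐ ω ∂P, Tendsto (fun n => S n ω / ∫ ω', S n ω' ∂P) atTop (nhds 1) := by
  obtain ⟨M, hM⟩ := hEY
  obtain rfl : S = fun n ω => ∑ k ∈ Finset.Icc 1 n, Y k ω := funext fun n => funext (hS n)
  have hintegral : ∀ n, ∫ ω, ∑ k ∈ Finset.Icc 1 n, Y k ω ∂P = ∑ k ∈ Finset.Icc 1 n, P[Y k] :=
    fun n => integral_finsetSum _ fun k _ => (hL2 k).integrable one_le_two
  refine ae_tendsto_div_integral_of_variance_le (M := M)
    (fun n => memLp_finsetSum _ fun k _ => hL2 k)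
    (fun n ω => Finset.sum_nonneg fun k _ => hnonneg k ω)
    (fun ω m n h => Finset.sum_le_sum_of_subset_of_nonneg (Finset.Icc_subset_Icc_right h)
      fun k _ _ => hnonneg k ω) (fun n => ?_) hES hδ hC.le hvar
  rw [hintegral, hintegral, Finset.sum_Icc_succ_top (by omega)]
  exact add_le_add_right (hM _) _

theorem SLLN_variance_condition
    {Ω : Type*} [MeasurableSpace Ω] (P : Measure Ω) [IsProbabilityMeasure P]
    (Y : ℕ → Ω → ℝ) (hmeas : ∀ n, Measurable (Y n))
    (hnonneg : ∀ n ω, 0 ≤ Y n ω) (hL2 : ∀ n, MemLp (Y n) 2 P)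
    (S : ℕ → Ω → ℝ) (hS : ∀ n ω, S n ω = ∑ k ∈ Finset.Icc 1 n, Y k ω)
    (hES : Tendsto (fun n => ∫ ω, S n ω ∂P) atTop atTop)
    (hEY : ∃ M : ℝ, ∀ n, ∫ ω, Y n ω ∂P ≤ M)
    (δ C : ℝ) (hδ : 0 < δ) (hC : 0 < C)
    (hvar : ∀ᶠ n in atTop,
      variance (S n) P ≤ C * (∫ ω, S n ω ∂P) ^ (2 - δ)) :
    ∀ᵐ ω ∂P, Tendsto (fun n => S n ω / ∫ ω', S n ω' ∂P) atTop (nhds 1) :=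
  SLLN_variance_condition_general P Y hnonneg hL2 S hS hES hEY δ C hδ hC hvar
end

section
/- Let (Y_n)_{n≥1} be a sequence of nonnegative random variables on a probability space (Ω, P) and set S_n = Σ_{k=1}^n Y_k. Suppose E[S_n] → ∞ as n → ∞, sup_{n≥1} E[Y_n] < ∞, and there exist δ > 0 and C > 0 such that Var(S_n) ≤ C·(E[S_n])^{2−δ} for all sufficiently large n. Then for every fixed β ∈ (0, δ/3), almost surely limsup_{n→∞} (E[S_n])^β · |S_n/E[S_n] − 1| < ∞. -/
/-!
Write `a n = E[S n]`, which is nondecreasing and tends to infinity. Choose checkpoints greedily: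
`c (k + 1)` is the first index with `a (c (k + 1)) ≥ a (c k) + a (c k) ^ (1 - β)`. Then
`a (c k) ^ β` grows at least linearly in `k`, so Chebyshev's bound
`P(|S m - a m| ≥ a m ^ (1 - β)) ≤ C a m ^ (2β - δ)`, taken at `c k` and at `c (k + 1) - 1`,
is summable in `k` because `2β - δ < -β`. By Borel–Cantelli, almost surely `S` is eventually
within `a m ^ (1 - β)` of its mean at both ends of each block `[c k, c (k + 1))`. Since `S` is
nondecreasing and `a` grows by less than `a (c k) ^ (1 - β)` inside a block, this squeezes
`|S n - a n|` below a constant multiple of `a n ^ (1 - β)` for every large `n`.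
-/

open MeasureTheory ProbabilityTheory Filter Real

namespace Real

lemma one_add_div_two_mul_le_rpow_one_add {β x : ℝ} (hβ : 0 ≤ β) (hx0 : 0 ≤ x)
    (hx2 : x ≤ 2) :
    1 + β / 2 * x ≤ (1 + x) ^ β := by
  have hlog : x / 2 ≤ log (1 + x) := by
    refine le_trans ?_ (le_log_one_add_of_nonneg hx0)
    rw [div_le_div_iff₀ (by norm_num) (by linarith)]
    nlinarith
  calc 1 + β / 2 * x ≤ log (1 + x) * β + 1 := by nlinarith
    _ ≤ exp (log (1 + x) * β) := add_one_le_exp _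
    _ = (1 + x) ^ β := (rpow_def_of_pos (by linarith) β).symm

lemma rpow_add_div_two_le_rpow_add_rpow_one_sub {x β : ℝ} (hx : 1 ≤ x) (hβ : 0 ≤ β) :
    x ^ β + β / 2 ≤ (x + x ^ (1 - β)) ^ β := by
  have hx0 : 0 < x := by linarith
  have hu1 : x ^ (-β) ≤ 1 := rpow_le_one_of_one_le_of_nonpos hx (by linarith)
  have hxu : x ^ β * x ^ (-β) = 1 := by rw [← rpow_add hx0]; simp
  calc x ^ β + β / 2 = x ^ β * (1 + β / 2 * x ^ (-β)) := by
        linear_combination (-(β / 2)) * hxu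
    _ ≤ x ^ β * (1 + x ^ (-β)) ^ β := by
        gcongr
        exact one_add_div_two_mul_le_rpow_one_add hβ (by positivity) (by linarith)
    _ = (x * (1 + x ^ (-β))) ^ β := (mul_rpow hx0.le (by positivity)).symm
    _ = (x + x ^ (1 - β)) ^ β := by
        rw [mul_add, mul_one, sub_eq_add_neg, rpow_add hx0, rpow_one]

lemma summable_one_add_mul_rpow {c q : ℝ} (hc : 0 < c) (hq : q < -1) :
    Summable fun k : ℕ => (1 + k * c) ^ q := by
  refine (((summable_one_div_nat_add_rpow c⁻¹ (-q)).2 (by linarith)).mul_left (c ^ q)).congr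
    fun k => ?_
  have hk : 0 < (k : ℝ) + c⁻¹ := by positivity
  rw [abs_of_pos hk, rpow_neg hk.le, one_div, inv_inv, ← mul_rpow hc.le hk.le, mul_add,
    mul_inv_cancel₀ hc.ne', add_comm, mul_comm]

lemma rpow_le_two_rpow_abs_mul_rpow {u v r : ℝ} (hv : 0 < v) (huv : u ≤ 2 * v)
    (hvu : v ≤ 2 * u) : u ^ r ≤ 2 ^ |r| * v ^ r := by
  rcases le_total 0 r with hr | hr
  · rw [abs_of_nonneg hr, ← mul_rpow zero_le_two hv.le]
    exact rpow_le_rpow (by linarith) huv hr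
  · rw [abs_of_nonpos hr, rpow_neg zero_le_two, ← inv_rpow zero_le_two,
      ← mul_rpow (by norm_num) hv.le]
    exact rpow_le_rpow_of_nonpos (by positivity) (by linarith) hr

end Real

lemma ENNReal.tsum_ofReal_ne_top {ι : Type*} {f : ι → ℝ} (hf : Summable f) :
    ∑' i, ENNReal.ofReal (f i) ≠ ⊤ :=
  ENNReal.tsum_coe_ne_top_iff_summable.2 hf.toNNReal

lemma StrictMono.exists_ge_apply_le_lt_apply_succ {t : ℕ → ℕ} (ht : StrictMono t) {K n : ℕ}
    (hn : t K ≤ n) : ∃ k, K ≤ k ∧ t k ≤ n ∧ n < t (k + 1) := by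
  have ht' : StrictMono fun j => t (j + K) := ht.comp (strictMono_id.add_const K)
  obtain ⟨j, hj, hj'⟩ := ht'.exists_between_of_tendsto_atTop ht'.tendsto_atTop (x := n + 1)
    (by simpa using Nat.lt_succ_of_le hn)
  exact ⟨j + K, Nat.le_add_left K j, Nat.lt_succ_iff.1 hj, by rw [Nat.add_right_comm]; omega⟩

lemma rpow_mul_abs_div_sub_one_le {s a : ℕ → ℝ} (hs : Monotone s) (ha : Monotone a) {β : ℝ}
    (hβ : 0 ≤ β) {m n p : ℕ} (hmn : m ≤ n) (hnp : n ≤ p) (ha1 : 1 ≤ a m)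
    (hgap : a p < a m + a m ^ (1 - β)) (hm : |s m - a m| < a m ^ (1 - β))
    (hp : |s p - a p| < a p ^ (1 - β)) :
    a n ^ β * |s n / a n - 1| ≤ 3 * 2 ^ |1 - β| := by
  set x := a m
  set y := a p
  set z := a n
  have hxz : x ≤ z := ha hmn
  have hzy : z ≤ y := ha hnp
  have hz : 0 < z := by linarith
  have hx_rpow : x ^ (1 - β) ≤ x := by
    simpa using rpow_le_rpow_of_exponent_le ha1 (by linarith : 1 - β ≤ 1)
  have hdev : |s n - z| ≤ 2 * x ^ (1 - β) + y ^ (1 - β) := by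
    rw [abs_le]
    constructor <;> linarith [abs_lt.1 hm, abs_lt.1 hp, hs hmn, hs hnp]
  have hxz' := rpow_le_two_rpow_abs_mul_rpow (u := x) (r := 1 - β) hz (by linarith) (by linarith)
  have hyz' := rpow_le_two_rpow_abs_mul_rpow (u := y) (r := 1 - β) hz (by linarith) (by linarith)
  calc z ^ β * |s n / z - 1| = z ^ β * |s n - z| / z := by
        rw [div_sub_one hz.ne', abs_div, abs_of_pos hz, mul_div_assoc]
    _ ≤ z ^ β * (3 * 2 ^ |1 - β| * z ^ (1 - β)) / z := by gcongr; linarith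
    _ = 3 * 2 ^ |1 - β| := by
        rw [rpow_sub hz, rpow_one]
        field_simp

lemma meas_rpow_le_abs_sub_integral_le {Ω : Type*} [MeasurableSpace Ω] {μ : Measure Ω}
    [IsFiniteMeasure μ] {X : Ω → ℝ} (hX : MemLp X 2 μ) {b β δ C : ℝ}
    (hb : 0 < b) (hbX : b ≤ μ[X]) (hβδ : 2 * β ≤ δ)
    (hvar : variance X μ ≤ C * μ[X] ^ (2 - δ)) :
    μ {ω | μ[X] ^ (1 - β) ≤ |X ω - μ[X]|} ≤ ENNReal.ofReal (C * b ^ (2 * β - δ)) := by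
  set x := μ[X]
  have hx : 0 < x := hb.trans_le hbX
  have hC : 0 ≤ C :=
    nonneg_of_mul_nonneg_left ((variance_nonneg X μ).trans hvar) (by positivity)
  refine (meas_ge_le_variance_div_sq hX (c := x ^ (1 - β)) (by positivity)).trans
    (ENNReal.ofReal_le_ofReal ?_)
  calc variance X μ / (x ^ (1 - β)) ^ 2 ≤ C * x ^ (2 - δ) / (x ^ (1 - β)) ^ 2 := by gcongr
    _ = C * x ^ (2 * β - δ) := by
        rw [← rpow_natCast, ← rpow_mul hx.le, mul_div_assoc, ← rpow_sub hx]
        congr 2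
        push_cast
        ring
    _ ≤ C * b ^ (2 * β - δ) :=
        mul_le_mul_of_nonneg_left (rpow_le_rpow_of_nonpos hb hbX (by linarith)) hC

structure IsCheckpointSeq (a : ℕ → ℝ) (β : ℝ) (c : ℕ → ℕ) : Prop where
  one_le_apply_zero : 1 ≤ a (c 0)
  le_succ : ∀ k, a (c k) + a (c k) ^ (1 - β) ≤ a (c (k + 1))
  lt_of_lt_succ : ∀ k n, n < c (k + 1) → a n < a (c k) + a (c k) ^ (1 - β)

lemma exists_isCheckpointSeq {a : ℕ → ℝ} (ha : Tendsto a atTop atTop) (β : ℝ) (N : ℕ) :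
    ∃ c, IsCheckpointSeq a β c ∧ N ≤ c 0 := by
  have hex : ∀ T, ∃ n, T ≤ a n := fun T => (ha.eventually_ge_atTop T).exists
  obtain ⟨c₀, hNc₀, hc₀⟩ :=
    ((eventually_ge_atTop N).and (ha.eventually_ge_atTop 1)).exists
  let c : ℕ → ℕ := fun k => Nat.rec c₀ (fun _ m => Nat.find (hex (a m + a m ^ (1 - β)))) k
  exact ⟨c, ⟨hc₀, fun _ => Nat.find_spec (hex _),
    fun _ _ hn => lt_of_not_ge (Nat.find_min (hex _) hn)⟩, hNc₀⟩

namespace IsCheckpointSeq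

section Deterministic

variable {a : ℕ → ℝ} {β : ℝ} {c : ℕ → ℕ} (hc : IsCheckpointSeq a β c)
include hc

lemma one_le (k : ℕ) : 1 ≤ a (c k) := by
  induction k with
  | zero => exact hc.one_le_apply_zero
  | succ k ih => linarith [hc.le_succ k, rpow_pos_of_pos (one_pos.trans_le ih) (1 - β)]

lemma pos (k : ℕ) : 0 < a (c k) := one_pos.trans_le (hc.one_le k)

lemma lt_succ (k : ℕ) : a (c k) < a (c (k + 1)) := by
  linarith [hc.le_succ k, rpow_pos_of_pos (hc.pos k) (1 - β)]

lemma strictMono (ha : Monotone a) : StrictMono c :=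
  strictMono_nat_of_lt_succ fun k => ha.reflect_lt (hc.lt_succ k)

lemma one_add_mul_le_rpow (hβ : 0 ≤ β) (k : ℕ) : 1 + k * (β / 2) ≤ a (c k) ^ β := by
  induction k with
  | zero => simpa using one_le_rpow (hc.one_le 0) hβ
  | succ k ih =>
    calc 1 + ↑(k + 1) * (β / 2) = 1 + k * (β / 2) + β / 2 := by push_cast; ring
      _ ≤ a (c k) ^ β + β / 2 := by linarith
      _ ≤ (a (c k) + a (c k) ^ (1 - β)) ^ β :=
          rpow_add_div_two_le_rpow_add_rpow_one_sub (hc.one_le k) hβ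
      _ ≤ a (c (k + 1)) ^ β :=
          rpow_le_rpow (by linarith [hc.pos k, rpow_pos_of_pos (hc.pos k) (1 - β)])
            (hc.le_succ k) hβ

lemma summable_rpow (hβ : 0 < β) {r : ℝ} (hr : r < -β) : Summable fun k => a (c k) ^ r := by
  refine (summable_one_add_mul_rpow (half_pos hβ) (q := r / β) ?_).of_nonneg_of_le
    (fun k => (rpow_pos_of_pos (hc.pos k) r).le) fun k => ?_
  · rwa [div_lt_iff₀ hβ, neg_one_mul]
  · calc a (c k) ^ r = (a (c k) ^ β) ^ (r / β) := by
          rw [← rpow_mul (hc.pos k).le, mul_div_cancel₀ _ hβ.ne']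
      _ ≤ (1 + k * (β / 2)) ^ (r / β) :=
          rpow_le_rpow_of_nonpos (by positivity) (hc.one_add_mul_le_rpow hβ.le k)
            (div_nonpos_of_nonpos_of_nonneg (by linarith) hβ.le)

lemma eventually_rpow_mul_abs_div_sub_one_le (ha : Monotone a) (hβ : 0 ≤ β) {s : ℕ → ℝ}
    (hs : Monotone s)
    (h : ∀ᶠ k in atTop, |s (c k) - a (c k)| < a (c k) ^ (1 - β) ∧
      |s (c (k + 1) - 1) - a (c (k + 1) - 1)| < a (c (k + 1) - 1) ^ (1 - β)) :
    ∀ᶠ n in atTop, a n ^ β * |s n / a n - 1| ≤ 3 * 2 ^ |1 - β| := by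
  obtain ⟨K, hK⟩ := eventually_atTop.1 h
  filter_upwards [eventually_ge_atTop (c K)] with n hn
  obtain ⟨k, hKk, hkn, hnk⟩ := (hc.strictMono ha).exists_ge_apply_le_lt_apply_succ hn
  exact rpow_mul_abs_div_sub_one_le hs ha hβ hkn (Nat.le_sub_one_of_lt hnk) (hc.one_le k)
    (hc.lt_of_lt_succ _ _ (by omega)) (hK k hKk).1 (hK k hKk).2

end Deterministic

section Probabilistic

variable {Ω : Type*} [MeasurableSpace Ω] {μ : Measure Ω} [IsFiniteMeasure μ]
  {X : ℕ → Ω → ℝ} {β : ℝ} {c : ℕ → ℕ}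

lemma ae_eventually_abs_sub_integral_lt (hc : IsCheckpointSeq (fun n => μ[X n]) β c)
    (hX : ∀ n, MemLp (X n) 2 μ) (ha : Monotone fun n => μ[X n]) (hβ : 0 < β) {δ C : ℝ}
    (hβδ : 3 * β < δ)
    (hvar : ∀ n, c 0 ≤ n → variance (X n) μ ≤ C * μ[X n] ^ (2 - δ)) :
    ∀ᵐ ω ∂μ, ∀ᶠ k in atTop, |X (c k) ω - μ[X (c k)]| < μ[X (c k)] ^ (1 - β) ∧
      |X (c (k + 1) - 1) ω - μ[X (c (k + 1) - 1)]| < μ[X (c (k + 1) - 1)] ^ (1 - β) := by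
  set D : ℕ → Set Ω := fun m => {ω | μ[X m] ^ (1 - β) ≤ |X m ω - μ[X m]|}
  have hmono := (hc.strictMono ha).monotone
  have hD : ∀ k m, c k ≤ m → μ (D m) ≤ ENNReal.ofReal (C * μ[X (c k)] ^ (2 * β - δ)) :=
    fun k m hm => meas_rpow_le_abs_sub_integral_le (hX m) (hc.pos k) (ha hm) (by linarith)
      (hvar m ((hmono (Nat.zero_le k)).trans hm))
  have hsum : Summable fun k => C * μ[X (c k)] ^ (2 * β - δ) :=
    (hc.summable_rpow hβ (by linarith)).mul_left C
  have hfin : ∑' k, μ (D (c k) ∪ D (c (k + 1) - 1)) ≠ ⊤ := by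
    refine ne_top_of_le_ne_top ?_ (ENNReal.tsum_le_tsum fun k =>
      (measure_union_le _ _).trans (add_le_add (hD k _ le_rfl) (hD k _ ?_)))
    · rw [ENNReal.tsum_add]
      exact ENNReal.add_ne_top.2
        ⟨ENNReal.tsum_ofReal_ne_top hsum, ENNReal.tsum_ofReal_ne_top hsum⟩
    · have := hc.strictMono ha (Nat.lt_add_one k)
      omega
  filter_upwards [ae_eventually_notMem hfin] with ω hω
  filter_upwards [hω] with k hk
  simpa [D, not_or] using hk

end Probabilistic

end IsCheckpointSeq

theorem SLLN_variance_condition_rate_general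
    {Ω : Type*} [MeasurableSpace Ω] (P : Measure Ω) [IsProbabilityMeasure P]
    (Y : ℕ → Ω → ℝ)
    (hnonneg : ∀ n ω, 0 ≤ Y n ω) (hL2 : ∀ n, MemLp (Y n) 2 P)
    (S : ℕ → Ω → ℝ) (hS : ∀ n ω, S n ω = ∑ k ∈ Finset.Icc 1 n, Y k ω)
    (hES : Tendsto (fun n => ∫ ω, S n ω ∂P) atTop atTop)
    (δ C : ℝ)
    (hvar : ∀ᶠ n in atTop,
      variance (S n) P ≤ C * (∫ ω, S n ω ∂P) ^ (2 - δ))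
    (β : ℝ) (hβ : β ∈ Set.Ioo 0 (δ / 3)) :
    ∀ᵐ ω ∂P, ∃ M : ℝ, ∀ᶠ n in atTop,
      (∫ ω', S n ω' ∂P) ^ β * |S n ω / ∫ ω', S n ω' ∂P - 1| ≤ M := by
  obtain ⟨hβ0, hβδ⟩ := hβ
  have hSL2 : ∀ n, MemLp (S n) 2 P := fun n => by
    rw [funext (hS n)]
    exact memLp_finsetSum _ fun k _ => hL2 k
  have hSmono : ∀ ω, Monotone fun n => S n ω := fun ω m n hmn => by
    simp only [hS]
    exact Finset.sum_le_sum_of_subset_of_nonneg (Finset.Icc_subset_Icc_right hmn)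
      fun k _ _ => hnonneg k ω
  have ha : Monotone fun n => ∫ ω, S n ω ∂P := fun m n hmn =>
    integral_mono ((hSL2 m).integrable one_le_two) ((hSL2 n).integrable one_le_two)
      fun ω => hSmono ω hmn
  obtain ⟨N, hN⟩ := eventually_atTop.1 hvar
  obtain ⟨c, hc, hNc⟩ := exists_isCheckpointSeq hES β N
  filter_upwards [hc.ae_eventually_abs_sub_integral_lt hSL2 ha hβ0 (by linarith)
    fun n hn => hN n (hNc.trans hn)] with ω hω
  exact ⟨_, hc.eventually_rpow_mul_abs_div_sub_one_le ha hβ0.le (hSmono ω) hω⟩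

theorem SLLN_variance_condition_rate
    {Ω : Type*} [MeasurableSpace Ω] (P : Measure Ω) [IsProbabilityMeasure P]
    (Y : ℕ → Ω → ℝ) (hmeas : ∀ n, Measurable (Y n))
    (hnonneg : ∀ n ω, 0 ≤ Y n ω) (hL2 : ∀ n, MemLp (Y n) 2 P)
    (S : ℕ → Ω → ℝ) (hS : ∀ n ω, S n ω = ∑ k ∈ Finset.Icc 1 n, Y k ω)
    (hES : Tendsto (fun n => ∫ ω, S n ω ∂P) atTop atTop)
    (hEY : ∃ M : ℝ, ∀ n, ∫ ω, Y n ω ∂P ≤ M)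
    (δ C : ℝ) (hδ : 0 < δ) (hC : 0 < C)
    (hvar : ∀ᶠ n in atTop,
      variance (S n) P ≤ C * (∫ ω, S n ω ∂P) ^ (2 - δ))
    (β : ℝ) (hβ : β ∈ Set.Ioo 0 (δ / 3)) :
    ∀ᵐ ω ∂P, ∃ M : ℝ, ∀ᶠ n in atTop,
      (∫ ω', S n ω' ∂P) ^ β * |S n ω / ∫ ω', S n ω' ∂P - 1| ≤ M :=
  SLLN_variance_condition_rate_general P Y hnonneg hL2 S hS hES δ C hvar β hβ
end

section
/- Let (Ω, 𝓕, P) be a probability space, let A_1, …, A_n be measurable sets, and let N_A(ω) = Σ_{i=1}^n 1_{A_i}(ω). Then for every 1 ≤ k ≤ n, P(N_A ≥ k) = Σ_{r=k}^n (−1)^{r−k} · C(r−1, k−1) · Σ_{1 ≤ i_1 < ⋯ < i_r ≤ n} P(A_{i_1} ∩ ⋯ ∩ A_{i_r}). -/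
/-!
If ω lies in exactly m of the sets, then ω ∈ ⋂ i ∈ s, A i iff s ⊆ {i | ω ∈ A i}, so at ω the
inner sum of indicators is C(m, r) and the right-hand side is the integral of
∑ r ≥ k, (-1)^(r-k) C(r-1, k-1) C(m, r). This is 1 for m ≥ k and 0 otherwise: by Pascal's
rule, passing from m to m + 1 adds
∑ j, (-1)^(j-k+1) C(j, k-1) C(m, j) = C(m, k-1) ∑ i, (-1)^i C(m-k+1, i),
which vanishes once m ≥ k.
-/

open Finset

theorem Int.sum_Icc_neg_one_pow_mul_choose_mul_choose {t m : ℕ} (htm : t < m) :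
    ∑ j ∈ Icc t m, (-1 : ℤ) ^ (j - t) * j.choose t * m.choose j = 0 := by
  have hterm (i : ℕ) : (-1 : ℤ) ^ (t + i - t) * (t + i).choose t * m.choose (t + i)
      = m.choose t * ((-1) ^ i * (m - t).choose i) := by
    rw [Nat.add_sub_cancel_left, mul_assoc, ← Nat.cast_mul, mul_comm _ (m.choose _),
      Nat.choose_mul (by omega), Nat.add_sub_cancel_left]
    push_cast; ring
  rw [← Ico_add_one_right_eq_Icc, sum_Ico_eq_sum_range, Nat.sub_add_comm htm.le]
  simp only [hterm, ← mul_sum, Int.alternating_sum_range_choose_of_ne (Nat.sub_ne_zero_of_lt htm),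
    mul_zero]

theorem Int.sum_Icc_neg_one_pow_mul_choose_pred_mul_choose {k m : ℕ} (hk : 1 ≤ k) (hkm : k ≤ m) :
    ∑ r ∈ Icc k m, (-1 : ℤ) ^ (r - k) * (r - 1).choose (k - 1) * m.choose r = 1 := by
  induction m, hkm using Nat.le_induction with
  | base => simp
  | succ m hkm ih =>
    have hpascal : ∀ r ∈ Icc k (m + 1),
        (-1 : ℤ) ^ (r - k) * (r - 1).choose (k - 1) * (m + 1).choose r
          = (-1) ^ (r - k) * (r - 1).choose (k - 1) * m.choose r
            + (-1) ^ (r - k) * (r - 1).choose (k - 1) * m.choose (r - 1) := by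
      intro r hr
      rw [Nat.choose_succ_left _ _ (by simp at hr; omega)]
      push_cast; ring
    have hshift :
        ∑ r ∈ Icc k (m + 1), (-1 : ℤ) ^ (r - k) * (r - 1).choose (k - 1) * m.choose (r - 1)
          = 0 := by
      obtain ⟨t, rfl⟩ : ∃ t, k = t + 1 := ⟨k - 1, by omega⟩
      rw [← map_add_right_Icc, sum_map]
      simpa using Int.sum_Icc_neg_one_pow_mul_choose_mul_choose (by omega : t < m)
    rw [sum_congr rfl hpascal, sum_add_distrib, hshift, sum_Icc_succ_top (by omega), ih,
      Nat.choose_succ_self]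
    simp

theorem Int.sum_Icc_neg_one_pow_mul_choose_pred_mul_choose_eq_ite {k m n : ℕ} (hk : 1 ≤ k)
    (hmn : m ≤ n) :
    ∑ r ∈ Icc k n, (-1 : ℤ) ^ (r - k) * (r - 1).choose (k - 1) * m.choose r
      = if k ≤ m then 1 else 0 := by
  have hvanish : ∀ r ∈ Icc k n, m < r →
      (-1 : ℤ) ^ (r - k) * (r - 1).choose (k - 1) * m.choose r = 0 := by
    intro r _ hmr
    rw [Nat.choose_eq_zero_of_lt hmr, Nat.cast_zero, mul_zero]
  split_ifs with hkm
  · rw [← sum_subset (Icc_subset_Icc_right hmn) fun r hr hr' => hvanish r hr (by simp_all)]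
    exact Int.sum_Icc_neg_one_pow_mul_choose_pred_mul_choose hk hkm
  · exact sum_eq_zero fun r hr => hvanish r hr (by simp at hr; omega)

open scoped Classical in
theorem Finset.sum_powersetCard_indicator_biInter {ι Ω R : Type*} [Fintype ι]
    [AddCommMonoidWithOne R] (A : ι → Set Ω) (r : ℕ) (ω : Ω) :
    ∑ s ∈ powersetCard r univ, (⋂ i ∈ s, A i).indicator (1 : Ω → R) ω
      = (#{i | ω ∈ A i}).choose r := by
  set T : Finset ι := {i | ω ∈ A i}
  have hind (s : Finset ι) :
      (⋂ i ∈ s, A i).indicator (1 : Ω → R) ω = if s ⊆ T then 1 else 0 := by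
    simp [T, Set.indicator_apply, subset_iff]
  have hfilter : {s ∈ powersetCard r (univ : Finset ι) | s ⊆ T} = powersetCard r T := by
    ext s; simp [and_comm]
  simp only [hind, sum_boole, hfilter, card_powersetCard]

open scoped Classical in
theorem Finset.indicator_setOf_le_card_filter_mem {ι Ω : Type*} [Fintype ι] (A : ι → Set Ω)
    {k : ℕ} (hk : 1 ≤ k) (ω : Ω) :
    {ω | k ≤ #{i | ω ∈ A i}}.indicator (1 : Ω → ℝ) ω
      = ∑ r ∈ Icc k (Fintype.card ι), (-1 : ℝ) ^ (r - k) * ((r - 1).choose (k - 1) : ℝ) *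
          ∑ s ∈ powersetCard r univ, (⋂ i ∈ s, A i).indicator 1 ω := by
  have hbinom : ∑ r ∈ Icc k (Fintype.card ι),
      (-1 : ℝ) ^ (r - k) * ((r - 1).choose (k - 1) : ℝ) * ((#{i | ω ∈ A i}).choose r : ℝ)
        = if k ≤ #{i | ω ∈ A i} then 1 else 0 := by
    exact_mod_cast Int.sum_Icc_neg_one_pow_mul_choose_pred_mul_choose_eq_ite hk (card_le_univ _)
  simp only [sum_powersetCard_indicator_biInter, hbinom]
  simp [Set.indicator_apply]

open MeasureTheory

open scoped Classical in
theorem measurableSet_setOf_le_card_filter_mem {ι Ω : Type*} [Fintype ι]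
    [MeasurableSpace Ω] {A : ι → Set Ω} (hA : ∀ i, MeasurableSet (A i)) (k : ℕ) :
    MeasurableSet {ω | k ≤ #{i | ω ∈ A i}} := by
  simp_rw [card_filter]
  exact measurableSet_le measurable_const
    (Finset.measurable_sum _ fun i _ => Measurable.ite (hA i) measurable_const measurable_const)

open scoped Classical in
theorem MeasureTheory.measureReal_setOf_le_card_filter_mem {ι Ω : Type*} [Fintype ι]
    [MeasurableSpace Ω] (μ : Measure Ω) [IsFiniteMeasure μ] {A : ι → Set Ω}
    (hA : ∀ i, MeasurableSet (A i)) {k : ℕ} (hk : 1 ≤ k) :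
    μ.real {ω | k ≤ #{i | ω ∈ A i}}
      = ∑ r ∈ Icc k (Fintype.card ι), (-1 : ℝ) ^ (r - k) * ((r - 1).choose (k - 1) : ℝ) *
          ∑ s ∈ powersetCard r univ, μ.real (⋂ i ∈ s, A i) := by
  have hinter (s : Finset ι) : MeasurableSet (⋂ i ∈ s, A i) :=
    s.measurableSet_biInter fun i _ => hA i
  have hint (s : Finset ι) : Integrable ((⋂ i ∈ s, A i).indicator (1 : Ω → ℝ)) μ :=
    (integrable_const 1).indicator (hinter s)
  rw [← integral_indicator_one (measurableSet_setOf_le_card_filter_mem hA k),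
    funext (indicator_setOf_le_card_filter_mem A hk),
    integral_finsetSum _ fun r _ => (integrable_finsetSum _ fun s _ => hint s).const_mul _]
  refine sum_congr rfl fun r _ => ?_
  rw [integral_const_mul, integral_finsetSum _ fun s _ => hint s]
  simp only [integral_indicator_one (hinter _)]

open scoped Classical in
theorem inclusion_exclusion_at_least_k_general
    {Ω : Type*} [MeasurableSpace Ω] (P : Measure Ω) [IsProbabilityMeasure P]
    (n : ℕ) (A : Fin n → Set Ω) (hA : ∀ i, MeasurableSet (A i))
    (k : ℕ) (hk1 : 1 ≤ k) :
    (P {ω | k ≤ (Finset.univ.filter (fun i : Fin n => ω ∈ A i)).card}).toReal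
      = ∑ r ∈ Finset.Icc k n, (-1 : ℝ) ^ (r - k) * (Nat.choose (r - 1) (k - 1) : ℝ) *
          ∑ s ∈ Finset.powersetCard r (Finset.univ : Finset (Fin n)),
            (P (⋂ i ∈ s, A i)).toReal := by
  simpa only [Fintype.card_fin, measureReal_def] using
    measureReal_setOf_le_card_filter_mem P hA hk1

open scoped Classical in
theorem inclusion_exclusion_at_least_k
    {Ω : Type*} [MeasurableSpace Ω] (P : Measure Ω) [IsProbabilityMeasure P]
    (n : ℕ) (A : Fin n → Set Ω) (hA : ∀ i, MeasurableSet (A i))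
    (k : ℕ) (hk1 : 1 ≤ k) (hkn : k ≤ n) :
    (P {ω | k ≤ (Finset.univ.filter (fun i : Fin n => ω ∈ A i)).card}).toReal
      = ∑ r ∈ Finset.Icc k n, (-1 : ℝ) ^ (r - k) * (Nat.choose (r - 1) (k - 1) : ℝ) *
          ∑ s ∈ Finset.powersetCard r (Finset.univ : Finset (Fin n)),
            (P (⋂ i ∈ s, A i)).toReal :=
  inclusion_exclusion_at_least_k_general P n A hA k hk1
end
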